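/- arXiv:nlin/0406007 — 2 statements merged into one kernel-verified Lean document; each statement's English description precedes it below -/
import Mathlib

section
/- Let α, β, γ, ε : ℝ with γ ≠ 0, and let a : ℝ be arbitrary. Define Y(z) = a + (1/10)(β/γ - ε)·tanh((1/10)(β/γ - ε)·z) and y(z) = -12γ·Y(z)² + (24γa + (12/5)β - (12/5)εγ)·Y(z) - (12/5)βa + (3/25)β²/γ + (19/25)βε - α - 12γa² + (12/5)γaε - (22/25)γε². Then y satisfies γ·y''' + β·y'' + α·y' + y·y' + (ε/2)·y² - C₀·y + C₁ = 0 on ℝ, where C₀ and C₁ are given by C₀ = (4/5)γεa² + (4/5)γεb - (126/125)γε³ - (4/5)βa² - (4/5)βb - (3/125)εβ²/γ + (128/125)ε²β - εα + (1/125)β³/γ² and C₁ = (1/2)εα² + γε³α - ε²βα + (409/1250)ε³β² - (18/625)εβ⁴/γ² - (553/625)γε⁴β + (72/625)ε²β³/γ + (589/1250)γ²ε⁵, with b = (1/100)ε² - a² - (1/50)βε/γ + (1/100)β²/γ². -/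
/-!
The wave is a quadratic polynomial `P` in `T = tanh (k z)`, `k = (β / γ - ε) / 10`. As
`d/dz tanh (k z) = k (1 - T ^ 2)`, each derivative of `z ↦ P (tanh (k z))` is again a polynomial in
`T`, so the left-hand side of the equation is a polynomial in `T`; the choice of `k`, `C₀` and
`C₁` makes all of its coefficients vanish.
-/
open Polynomial Real

theorem Real.hasDerivAt_tanh (x : ℝ) : HasDerivAt tanh (1 - tanh x ^ 2) x := by
  have hcosh : cosh x ≠ 0 := (cosh_pos x).ne'
  have h := (hasDerivAt_sinh x).div (hasDerivAt_cosh x) hcosh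
  rw [show sinh / cosh = tanh from funext fun y => (tanh_eq_sinh_div_cosh y).symm] at h
  refine h.congr_deriv ?_
  rw [tanh_eq_sinh_div_cosh]
  field_simp

/-- Since `tanh' = 1 - tanh ^ 2`, differentiating `z ↦ P (tanh (k z))` amounts to applying this
operator to `P`. -/
noncomputable def tanhDerivative (k : ℝ) (P : ℝ[X]) : ℝ[X] :=
  C k * (1 - X ^ 2) * derivative P

theorem hasDerivAt_eval_tanh_mul (P : ℝ[X]) (k z : ℝ) :
    HasDerivAt (fun z => P.eval (tanh (k * z))) ((tanhDerivative k P).eval (tanh (k * z))) z := by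
  have h := (P.hasDerivAt (tanh (k * z))).comp z
    ((hasDerivAt_tanh (k * z)).comp z ((hasDerivAt_id z).const_mul k))
  refine h.congr_deriv ?_
  simp only [tanhDerivative, eval_mul, eval_C, eval_sub, eval_one, eval_pow, eval_X]
  ring

theorem deriv_eval_tanh_mul (P : ℝ[X]) (k : ℝ) :
    deriv (fun z => P.eval (tanh (k * z))) = fun z => (tanhDerivative k P).eval (tanh (k * z)) :=
  funext fun z => (hasDerivAt_eval_tanh_mul P k z).deriv

theorem convective_fluid_solitary_wave (α β γ ε a : ℝ) (hγ : γ ≠ 0) :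
    let Y : ℝ → ℝ := fun z =>
      a + (1/10) * (β/γ - ε) * Real.tanh ((1/10) * (β/γ - ε) * z)
    let y : ℝ → ℝ := fun z =>
      -12*γ*(Y z)^2 + (24*γ*a + (12/5)*β - (12/5)*ε*γ) * Y z
        - (12/5)*β*a + (3/25)*β^2/γ + (19/25)*β*ε - α - 12*γ*a^2
        + (12/5)*γ*a*ε - (22/25)*γ*ε^2
    let b : ℝ := (1/100)*ε^2 - a^2 - (1/50)*β*ε/γ + (1/100)*β^2/γ^2
    let C₀ : ℝ := (4/5)*γ*ε*a^2 + (4/5)*γ*ε*b - (126/125)*γ*ε^3 - (4/5)*β*a^2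
      - (4/5)*β*b - (3/125)*ε*β^2/γ + (128/125)*ε^2*β - ε*α + (1/125)*β^3/γ^2
    let C₁ : ℝ := (1/2)*ε*α^2 + γ*ε^3*α - ε^2*β*α + (409/1250)*ε^3*β^2
      - (18/625)*ε*β^4/γ^2 - (553/625)*γ*ε^4*β + (72/625)*ε^2*β^3/γ
      + (589/1250)*γ^2*ε^5
    ∀ z : ℝ,
      γ * deriv (deriv (deriv y)) z + β * deriv (deriv y) z + α * deriv y z
        + y z * deriv y z + (ε/2) * (y z)^2 - C₀ * y z + C₁ = 0 := by
  intro Y y b C₀ C₁ z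
  set k := (1/10) * (β/γ - ε)
  set P : ℝ[X] := C (-12*γ) * (C a + C k * X) ^ 2
    + C (24*γ*a + (12/5)*β - (12/5)*ε*γ) * (C a + C k * X)
    + C (- (12/5)*β*a + (3/25)*β^2/γ + (19/25)*β*ε - α - 12*γ*a^2
        + (12/5)*γ*a*ε - (22/25)*γ*ε^2)
  have hy : y = fun z => P.eval (tanh (k * z)) := by
    funext z
    simp only [y, Y, P, eval_add, eval_mul, eval_C, eval_pow, eval_X]
    ring
  -- With `β = γ (10 k + ε)` every quotient by `γ` cancels, leaving a polynomial identity in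
  -- `T = tanh (k z)`.
  have hβ : β = γ * (10 * k + ε) := by simp only [k]; field_simp; ring
  rw [hy, deriv_eval_tanh_mul, deriv_eval_tanh_mul, deriv_eval_tanh_mul]
  simp only [tanhDerivative, eval_add, eval_mul, eval_C, eval_pow,
    eval_X, eval_sub, eval_one, derivative_add, derivative_mul, derivative_C, derivative_X,
    derivative_sq, derivative_sub, derivative_one, derivative_zero, eval_zero, C₀, C₁, b, P]
  generalize tanh (k * z) = T
  clear_value k
  subst hβ
  field_simp
  ring
end

section
/- Suppose Y : ℝ → ℝ satisfies the Riccati equation Y' + Y² - 2aY - ((1/100)ε² - a² - (1/50)βε/γ + (1/100)β²/γ²) = 0 on ℝ, with γ ≠ 0. Then y := -12γY² + (24γa + (12/5)(β - εγ))Y + A₀ with A₀ = -(12/5)βa + (3/25)β²/γ + (19/25)βε - α - 12γa² + (12/5)γaε - (22/25)γε² satisfies γy''' + βy'' + αy' + yy' + (ε/2)y² - C₀y + C₁ = 0 on ℝ for the values of C₀ and C₁ given by C₀ = (4/5)γεa² + (4/5)γεb - (126/125)γε³ - (4/5)βa² - (4/5)βb - (3/125)εβ²/γ + (128/125)ε²β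 - εα + (1/125)β³/γ², C₁ = (1/2)εα² + γε³α - ε²βα + (409/1250)ε³β² - (18/625)εβ⁴/γ² - (553/625)γε⁴β + (72/625)ε²β³/γ + (589/1250)γ²ε⁵, where b = (1/100)ε² - a² - (1/50)βε/γ + (1/100)β²/γ². -/
/-!
Because `Y' = Q(Y)` for the quadratic `Q = -X² + 2aX + b`, every polynomial expression `p(Y)` has
derivative `(p' Q)(Y)`. Hence `y = P(Y)` and its first three derivatives are polynomials in `Y`, and
the travelling-wave equation becomes a polynomial identity in `Y` of degree five, whose coefficients
vanish for the stated choices of `A₀`, `C₀` and `C₁`.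
-/

open Polynomial

theorem deriv_eval_comp_of_hasDerivAt {𝕜 : Type*} [NontriviallyNormedField 𝕜] {Y : 𝕜 → 𝕜}
    {Q : 𝕜[X]} (hY : ∀ z, HasDerivAt Y (Q.eval (Y z)) z) (p : 𝕜[X]) :
    deriv (fun z => p.eval (Y z)) = fun z => (derivative p * Q).eval (Y z) := by
  funext z
  rw [eval_mul]
  exact ((p.hasDerivAt (Y z)).comp z (hY z)).deriv

theorem convective_fluid_from_riccati (α β γ ε a : ℝ) (hγ : γ ≠ 0)
    (Y : ℝ → ℝ) (hY : Differentiable ℝ Y)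
    (hRic : ∀ z, deriv Y z + (Y z)^2 - 2*a*(Y z)
      - ((1/100)*ε^2 - a^2 - (1/50)*β*ε/γ + (1/100)*β^2/γ^2) = 0) :
    let A₀ : ℝ := -(12/5)*β*a + (3/25)*β^2/γ + (19/25)*β*ε - α - 12*γ*a^2
      + (12/5)*γ*a*ε - (22/25)*γ*ε^2
    let y : ℝ → ℝ := fun z =>
      -12*γ*(Y z)^2 + (24*γ*a + (12/5)*(β - ε*γ)) * Y z + A₀
    let b : ℝ := (1/100)*ε^2 - a^2 - (1/50)*β*ε/γ + (1/100)*β^2/γ^2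
    let C₀ : ℝ := (4/5)*γ*ε*a^2 + (4/5)*γ*ε*b - (126/125)*γ*ε^3 - (4/5)*β*a^2
      - (4/5)*β*b - (3/125)*ε*β^2/γ + (128/125)*ε^2*β - ε*α + (1/125)*β^3/γ^2
    let C₁ : ℝ := (1/2)*ε*α^2 + γ*ε^3*α - ε^2*β*α + (409/1250)*ε^3*β^2
      - (18/625)*ε*β^4/γ^2 - (553/625)*γ*ε^4*β + (72/625)*ε^2*β^3/γ
      + (589/1250)*γ^2*ε^5
    ∀ z : ℝ,
      γ * deriv (deriv (deriv y)) z + β * deriv (deriv y) z + α * deriv y z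
        + y z * deriv y z + (ε/2) * (y z)^2 - C₀ * y z + C₁ = 0 := by
  intro A₀ y b C₀ C₁ z
  set Q : ℝ[X] := -X ^ 2 + C (2 * a) * X + C b
  have hYQ : ∀ w, HasDerivAt Y (Q.eval (Y w)) w := by
    intro w
    refine (hY w).hasDerivAt.congr_deriv ?_
    simp only [Q, b, eval_add, eval_neg, eval_mul, eval_pow, eval_C, eval_X]
    linarith [hRic w]
  set P : ℝ[X] := C (-12 * γ) * X ^ 2 + C (24 * γ * a + (12 / 5) * (β - ε * γ)) * X + C A₀
  have hy : y = fun w => P.eval (Y w) := by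
    funext w
    simp only [y, P, eval_add, eval_mul, eval_pow, eval_C, eval_X]
  rw [hy, deriv_eval_comp_of_hasDerivAt hYQ, deriv_eval_comp_of_hasDerivAt hYQ,
    deriv_eval_comp_of_hasDerivAt hYQ]
  simp only [P, Q, derivative_add, derivative_neg, derivative_mul, derivative_C, derivative_X,
    derivative_X_sq, derivative_one, derivative_zero, eval_add, eval_neg, eval_mul, eval_pow,
    eval_C, eval_X, eval_zero, eval_one]
  simp only [C₀, C₁, b, A₀]
  field_simp
  ring
end
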